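/- For two i.i.d. items with values from F × F, and any deterministic menu (a,b,c) with a < b ≤ c ≤ a+b and c > 2a: if 2a · Pr[a ≤ v < c−a] ≥ (c−2a) · Pr[v ≥ c−a] (where v ~ F), then Rev(b,b,c) + Rev(a,a,2a) ≥ 2·Rev(a,b,c); so one of the symmetric menus (b,b,c), (a,a,2a) has revenue at least Rev(a,b,c). -/

import Mathlib

/-
Sort the values so that `v₁ ≤ v₂`, and put `M = [a, c - a)`, `H = [c - a, ∞)`. If `v₂ < c - a`,
the menu `(a, b, c)` only sells single items at price `a`, like `(a, a, 2a)`. If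
`v₁ < a ≤ c - a ≤ v₂`, it charges the buyer `(v₁, v₂)` what `(b, b, c)` charges, and the buyer
`(v₂, v₁)` the price `a`. In the remaining cases it sells the bundle, except to `(v₂, v₁)` when
`v₁ ∈ M`. Hence the payments of `(v₁, v₂)` and `(v₂, v₁)` to `(a, b, c)` add up to at most the
payments of `(v₁, v₂)` to `(b, b, c)` and to `(a, a, 2a)`, up to a correction of `+a` on
`M × H ∪ H × M` and `-(c - 2a)` on `H × H`. Integrating against `F × F` gives
`2 Rev(a,b,c) + 2a F(M) F(H) ≤ Rev(b,b,c) + Rev(a,a,2a) + (c - 2a) F(H)²`, and the hypothesis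
on `F`, multiplied by `F(H)`, absorbs the correction.
-/

open MeasureTheory

/-- Payment made by a utility-maximizing additive buyer with values `(v1, v2)` facing the
deterministic menu charging `a` for item 1, `b` for item 2, `c` for the pair;
ties are broken in favor of the higher payment. -/
noncomputable def pay (a b c v1 v2 : ℝ) : ℝ :=
  let u1 := v1 - a
  let u2 := v2 - b
  let u12 := v1 + v2 - c
  let m := max (max 0 u1) (max u2 u12)
  max (if u1 = m then a else 0) (max (if u2 = m then b else 0) (if u12 = m then c else 0))

/-- Expected revenue of the menu `(a, b, c)` when values are drawn from `μ`. -/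
noncomputable def rev (μ : Measure (ℝ × ℝ)) (a b c : ℝ) : ℝ :=
  ∫ v, pay a b c v.1 v.2 ∂μ

open Set

theorem integral_indicator_prod_one {α β : Type*} [MeasurableSpace α] [MeasurableSpace β]
    (μ : Measure α) (ν : Measure β) [SFinite ν] {s : Set α} {t : Set β} (hs : MeasurableSet s)
    (ht : MeasurableSet t) : ∫ v, (s ×ˢ t).indicator 1 v ∂μ.prod ν = μ.real s * ν.real t :=
  (integral_indicator_one (hs.prod ht)).trans (measureReal_prod_prod s t)

theorem pay_comm (a b c v1 v2 : ℝ) : pay a b c v1 v2 = pay b a c v2 v1 := by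
  have hm : max (max 0 (v2 - b)) (max (v1 - a) (v2 + v1 - c)) =
      max (max 0 (v1 - a)) (max (v2 - b) (v1 + v2 - c)) := by
    rw [add_comm v2 v1, max_max_max_comm, max_comm (v2 - b), max_max_max_comm]
  simp only [pay]
  rw [hm, add_comm v2 v1, max_left_comm]

theorem measurable_pay (a b c : ℝ) : Measurable fun v : ℝ × ℝ => pay a b c v.1 v.2 := by
  have hm : Measurable fun v : ℝ × ℝ =>
      max (max 0 (v.1 - a)) (max (v.2 - b) (v.1 + v.2 - c)) := by fun_prop
  have hite : ∀ (f : ℝ × ℝ → ℝ) (p : ℝ), Measurable f →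
      Measurable fun v : ℝ × ℝ =>
        if f v = max (max 0 (v.1 - a)) (max (v.2 - b) (v.1 + v.2 - c)) then p else 0 :=
    fun f p hf => Measurable.ite (measurableSet_eq_fun hf hm) measurable_const measurable_const
  exact (hite _ a (by fun_prop)).max ((hite _ b (by fun_prop)).max (hite _ c (by fun_prop)))

section Menu

variable {a b c : ℝ}

theorem pay_eq_ite (ha : 0 ≤ a) (hab : a ≤ b) (hbc : b ≤ c) (v1 v2 : ℝ) :
    pay a b c v1 v2 =
      if c - b ≤ v1 ∧ c - a ≤ v2 ∧ c ≤ v1 + v2 then c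
      else if b ≤ v2 ∧ v1 - a ≤ v2 - b then b
      else if a ≤ v1 then a else 0 := by
  simp only [pay]
  split_ifs <;> grind

theorem pay_mem_Icc (ha : 0 ≤ a) (hab : a ≤ b) (hbc : b ≤ c) (v1 v2 : ℝ) :
    pay a b c v1 v2 ∈ Icc 0 c := by
  rw [pay_eq_ite ha hab hbc]
  split_ifs <;> constructor <;> linarith

theorem integrable_pay (ha : 0 ≤ a) (hab : a ≤ b) (hbc : b ≤ c)
    (μ : Measure (ℝ × ℝ)) [IsFiniteMeasure μ] :
    Integrable (fun v : ℝ × ℝ => pay a b c v.1 v.2) μ := by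
  refine .of_bound (measurable_pay a b c).aestronglyMeasurable c (.of_forall fun v => ?_)
  obtain ⟨h0, hc⟩ := pay_mem_Icc ha hab hbc v.1 v.2
  rwa [Real.norm_of_nonneg h0]

theorem pay_eq_bundle (ha : 0 ≤ a) (hab : a ≤ b) (hbc : b ≤ c) {v1 v2 : ℝ}
    (h1 : c - b ≤ v1) (h2 : c - a ≤ v2) (h12 : c ≤ v1 + v2) : pay a b c v1 v2 = c := by
  rw [pay_eq_ite ha hab hbc, if_pos ⟨h1, h2, h12⟩]

theorem pay_eq_ite_of_lt_sub (ha : 0 ≤ a) (hab : a ≤ b) (hbc : b ≤ c) (hsub : c ≤ a + b)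
    {v1 v2 : ℝ} (h2 : v2 < c - a) : pay a b c v1 v2 = if a ≤ v1 then a else 0 := by
  rw [pay_eq_ite ha hab hbc, if_neg fun h => h2.not_ge h.2.1,
    if_neg fun h => by linarith [h.1]]

theorem pay_eq_pay_of_lt_of_sub_le (ha : 0 ≤ a) (hab : a ≤ b) (hbc : b ≤ c) {v1 v2 : ℝ}
    (h1 : v1 < a) (h2 : c - a ≤ v2) : pay a b c v1 v2 = pay b b c v1 v2 := by
  rw [pay_eq_ite ha hab hbc, pay_eq_ite (ha.trans hab) le_rfl hbc]
  split_ifs <;> grind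

theorem pay_self_two_mul (ha : 0 ≤ a) (v1 v2 : ℝ) :
    pay a a (2 * a) v1 v2 = (if a ≤ v1 then a else 0) + (if a ≤ v2 then a else 0) := by
  rw [pay_eq_ite ha le_rfl (by linarith)]
  split_ifs <;> grind

theorem pay_add_pay_swap_le_of_le (ha : 0 ≤ a) (hab : a ≤ b) (hbc : b ≤ c) (hsub : c ≤ a + b)
    (h2a : 2 * a ≤ c) {v1 v2 : ℝ} (hv : v1 ≤ v2) :
    pay a b c v1 v2 + pay a b c v2 v1 +
        a * ((Ico a (c - a) ×ˢ Ici (c - a)).indicator 1 (v1, v2) +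
          (Ici (c - a) ×ˢ Ico a (c - a)).indicator 1 (v1, v2)) ≤
      pay b b c v1 v2 + pay a a (2 * a) v1 v2 +
        (c - 2 * a) * (Ici (c - a) ×ˢ Ici (c - a)).indicator 1 (v1, v2) := by
  have hb : 0 ≤ b := ha.trans hab
  simp only [indicator_apply, mem_prod, mem_Ico, mem_Ici, Pi.one_apply]
  rcases lt_or_ge v2 (c - a) with h2 | h2
  · have h1 : v1 < c - a := hv.trans_lt h2
    rw [pay_eq_ite_of_lt_sub ha hab hbc hsub h2, pay_eq_ite_of_lt_sub ha hab hbc hsub h1,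
      pay_self_two_mul ha]
    simp only [h1.not_ge, h2.not_ge, and_false, false_and, if_false]
    linarith [(pay_mem_Icc hb le_rfl hbc v1 v2).1]
  rcases lt_or_ge v1 (c - a) with h1 | h1
  · have hswap : pay a b c v2 v1 = a := by
      rw [pay_eq_ite_of_lt_sub ha hab hbc hsub h1, if_pos (by linarith)]
    rcases lt_or_ge v1 a with h1a | h1a
    · rw [pay_eq_pay_of_lt_of_sub_le ha hab hbc h1a h2, hswap, pay_self_two_mul ha]
      simp [h1a.not_ge, h1.not_ge, h2, show a ≤ v2 by linarith]
    · rw [pay_eq_bundle ha hab hbc (by linarith) h2 (by linarith), hswap,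
        pay_eq_bundle hb le_rfl hbc (by linarith) (by linarith) (by linarith),
        pay_self_two_mul ha]
      simp only [h1a, h1, h1.not_ge, h2, show a ≤ v2 by linarith, and_self, true_and, false_and,
        and_true, if_true, if_false]
      linarith
  · rw [pay_eq_bundle ha hab hbc (by linarith) h2 (by linarith),
      pay_eq_bundle ha hab hbc (by linarith) h1 (by linarith),
      pay_eq_bundle hb le_rfl hbc (by linarith) (by linarith) (by linarith),
      pay_self_two_mul ha]
    simp only [h1, h2, not_lt.2 h1, not_lt.2 h2, show a ≤ v1 by linarith,
      show a ≤ v2 by linarith, and_self, and_false, and_true, if_true, if_false]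
    linarith

theorem pay_add_pay_swap_le (ha : 0 ≤ a) (hab : a ≤ b) (hbc : b ≤ c) (hsub : c ≤ a + b)
    (h2a : 2 * a ≤ c) (v : ℝ × ℝ) :
    pay a b c v.1 v.2 + pay a b c v.2 v.1 +
        a * ((Ico a (c - a) ×ˢ Ici (c - a)).indicator 1 v +
          (Ici (c - a) ×ˢ Ico a (c - a)).indicator 1 v) ≤
      pay b b c v.1 v.2 + pay a a (2 * a) v.1 v.2 +
        (c - 2 * a) * (Ici (c - a) ×ˢ Ici (c - a)).indicator 1 v := by
  obtain ⟨v1, v2⟩ := v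
  rcases le_total v1 v2 with hv | hv
  · exact pay_add_pay_swap_le_of_le ha hab hbc hsub h2a hv
  · have h := pay_add_pay_swap_le_of_le ha hab hbc hsub h2a hv
    rw [pay_comm b b c v2 v1, pay_comm a a (2 * a) v2 v1] at h
    simp only [indicator_apply, mem_prod, Pi.one_apply, and_comm] at h ⊢
    linarith

theorem two_mul_rev_add_le (μ : Measure ℝ) [IsFiniteMeasure μ] (ha : 0 ≤ a)
    (hab : a ≤ b) (hbc : b ≤ c) (hsub : c ≤ a + b) (h2a : 2 * a ≤ c) :
    2 * rev (μ.prod μ) a b c + a * (2 * (μ.real (Ico a (c - a)) * μ.real (Ici (c - a)))) ≤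
      rev (μ.prod μ) b b c + rev (μ.prod μ) a a (2 * a) +
        (c - 2 * a) * (μ.real (Ici (c - a)) * μ.real (Ici (c - a))) := by
  have hM : MeasurableSet (Ico a (c - a)) := measurableSet_Ico
  have hH : MeasurableSet (Ici (c - a)) := measurableSet_Ici
  have hind : ∀ {s t : Set ℝ}, MeasurableSet s → MeasurableSet t →
      Integrable ((s ×ˢ t).indicator 1) (μ.prod μ) := fun hs ht =>
    (integrable_const (1 : ℝ)).indicator (hs.prod ht)
  have iMH := hind hM hH
  have iHM := hind hH hM
  have iHH := hind hH hH
  have iP := integrable_pay ha hab hbc (μ.prod μ)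
  have iP' : Integrable (fun v : ℝ × ℝ => pay a b c v.2 v.1) (μ.prod μ) := iP.swap
  have iQ := integrable_pay (ha.trans hab) le_rfl hbc (μ.prod μ)
  have iA := integrable_pay ha le_rfl (show a ≤ 2 * a by linarith) (μ.prod μ)
  have hswap : ∫ v, pay a b c v.2 v.1 ∂μ.prod μ = rev (μ.prod μ) a b c :=
    integral_prod_swap fun v : ℝ × ℝ => pay a b c v.1 v.2
  have h := integral_mono ((iP.add iP').add ((iMH.add iHM).const_mul a))
    ((iQ.add iA).add (iHH.const_mul (c - 2 * a))) (pay_add_pay_swap_le ha hab hbc hsub h2a)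
  rw [integral_add' (iP.add iP') ((iMH.add iHM).const_mul a), integral_add' iP iP',
    integral_const_mul, integral_add' iMH iHM, integral_add' (iQ.add iA) (iHH.const_mul _),
    integral_add' iQ iA, integral_const_mul, hswap, integral_indicator_prod_one μ μ hM hH,
    integral_indicator_prod_one μ μ hH hM, integral_indicator_prod_one μ μ hH hH] at h
  simp only [rev] at h ⊢
  linarith

end Menu

theorem stmt10_general (μ : Measure ℝ) [IsProbabilityMeasure μ]
    (a b c : ℝ) (ha : 0 ≤ a) (hab : a < b) (hbc : b ≤ c) (hsub : c ≤ a + b)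
    (h2a : 2 * a < c)
    (hcond : (c - 2 * a) * (μ (Set.Ici (c - a))).toReal ≤
      2 * a * (μ (Set.Ico a (c - a))).toReal) :
    2 * rev (μ.prod μ) a b c ≤ rev (μ.prod μ) b b c + rev (μ.prod μ) a a (2 * a) ∧
    (rev (μ.prod μ) a b c ≤ rev (μ.prod μ) b b c ∨
      rev (μ.prod μ) a b c ≤ rev (μ.prod μ) a a (2 * a)) := by
  have h := two_mul_rev_add_le μ ha hab.le hbc hsub h2a.le
  simp only [measureReal_def] at h
  have hcorr := mul_le_mul_of_nonneg_right hcond (μ (Set.Ici (c - a))).toReal_nonneg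
  have hsum : 2 * rev (μ.prod μ) a b c ≤ rev (μ.prod μ) b b c + rev (μ.prod μ) a a (2 * a) := by
    linarith
  refine ⟨hsum, ?_⟩
  by_contra! hlt
  linarith [hlt.1, hlt.2]

theorem stmt10 (μ : Measure ℝ) [IsProbabilityMeasure μ] (hsupp : μ (Set.Iio 0) = 0)
    (a b c : ℝ) (ha : 0 ≤ a) (hab : a < b) (hbc : b ≤ c) (hsub : c ≤ a + b)
    (h2a : 2 * a < c)
    (hcond : (c - 2 * a) * (μ (Set.Ici (c - a))).toReal ≤
      2 * a * (μ (Set.Ico a (c - a))).toReal) :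
    2 * rev (μ.prod μ) a b c ≤ rev (μ.prod μ) b b c + rev (μ.prod μ) a a (2 * a) ∧
    (rev (μ.prod μ) a b c ≤ rev (μ.prod μ) b b c ∨
      rev (μ.prod μ) a b c ≤ rev (μ.prod μ) a a (2 * a)) :=
  stmt10_general μ a b c ha hab hbc hsub h2a hcond
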